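/- Let d ≥ 2 and 1 ≤ n ≤ d/2. There exists a nonzero vector ψ ∈ C^d with exactly d − n nonzero standard-basis coordinates and exactly 2 nonzero Fourier coefficients if and only if n divides d. -/

import Mathlib

open Complex Finset
open scoped Classical

noncomputable def dftOmega (d : ℕ) : ℂ := Complex.exp (2 * Real.pi * Complex.I / d)

/-- The j-th Fourier basis vector of `ℂ^d`, with i-th entry `ω^{ij}/√d`. -/
noncomputable def fourierVec (d : ℕ) (j : Fin d) : Fin d → ℂ :=
  fun i => dftOmega d ^ ((i : ℕ) * (j : ℕ)) / Real.sqrt d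

/-- The j-th Fourier coefficient `⟨f_j, ψ⟩ = (1/√d)∑_i ω^{−ij} ψ(i)`. -/
noncomputable def dftCoeff (d : ℕ) (ψ : Fin d → ℂ) (j : Fin d) : ℂ :=
  ∑ i, (starRingEnd ℂ) (fourierVec d j i) * ψ i

/-- Number of nonzero standard-basis coordinates of ψ. -/
noncomputable def nA (d : ℕ) (ψ : Fin d → ℂ) : ℕ :=
  (Finset.univ.filter fun i => ψ i ≠ 0).card

/-- Number of nonzero Fourier coefficients of ψ. -/
noncomputable def nB (d : ℕ) (ψ : Fin d → ℂ) : ℕ :=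
  (Finset.univ.filter fun j => dftCoeff d ψ j ≠ 0).card

/-- Kirkwood-Dirac distribution `Q_{ij} = ⟨e_i,ψ⟩⟨ψ,f_j⟩⟨f_j,e_i⟩` of ψ with
respect to the standard basis and the Fourier basis. -/
noncomputable def KD (d : ℕ) (ψ : Fin d → ℂ) (i j : Fin d) : ℂ :=
  ψ i * (∑ k, (starRingEnd ℂ) (ψ k) * fourierVec d j k) * (starRingEnd ℂ) (fourierVec d j i)


/-!
By Fourier inversion, a vector with exactly two nonzero Fourier coefficients is
`ψ = a f_j + b f_k`, and `ψ i = 0` iff `ζ ^ i = -b / a` for the `d`-th root of unity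
`ζ = ω ^ j / ω ^ k`. So the zero set of `ψ` is a fiber of the homomorphism `i ↦ ζ ^ i` on
`ℤ/d`, hence empty or a coset of its kernel; having `n` elements, it forces `n ∣ d`.
Conversely, if `d = n e` then `f_0 - f_n` has Fourier support `{0, n}` and vanishes exactly at
the `n` multiples of `e`.
-/

open ComplexConjugate

theorem card_filter_dvd_range_mul (n : ℕ) {e : ℕ} (he : 0 < e) :
    #{i ∈ range (n * e) | e ∣ i} = n := by
  have himage : {i ∈ range (n * e) | e ∣ i} = (range n).image (· * e) := by
    ext i
    simp only [mem_filter, mem_range, mem_image]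
    constructor
    · rintro ⟨hi, k, rfl⟩
      exact ⟨k, lt_of_mul_lt_mul_right (by linarith) (Nat.zero_le e), mul_comm _ _⟩
    · rintro ⟨k, hk, rfl⟩
      exact ⟨Nat.mul_lt_mul_of_pos_right hk he, dvd_mul_left _ _⟩
  rw [himage, card_image_of_injective _ (mul_left_injective₀ he.ne'), card_range]

theorem card_filter_pow_eq_pow_dvd {M : Type*} [Monoid M] {d : ℕ} [NeZero d] {ζ : M}
    (hζ : ζ ^ d = 1) (i₀ : Fin d) :
    #{i : Fin d | ζ ^ (i : ℕ) = ζ ^ (i₀ : ℕ)} ∣ d := by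
  set u := Units.ofPowEqOne ζ d hζ (NeZero.ne d)
  have hu : u ^ d = 1 := Units.pow_ofPowEqOne hζ (NeZero.ne d)
  let χ : Fin d →+ Additive Mˣ :=
    AddMonoidHom.mk' (fun i => .ofMul (u ^ (i : ℕ))) fun i j => by
      simp only [Fin.val_add, ← pow_eq_pow_mod _ hu, pow_add, ofMul_mul]
  have hfiber (i : Fin d) : ζ ^ (i : ℕ) = ζ ^ (i₀ : ℕ) ↔ i ∈ χ ⁻¹' {χ i₀} := by
    change _ ↔ Additive.ofMul (u ^ (i : ℕ)) = Additive.ofMul (u ^ (i₀ : ℕ))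
    rw [EmbeddingLike.apply_eq_iff_eq, Units.ext_iff, Units.val_pow_eq_pow_val,
      Units.val_pow_eq_pow_val, Units.val_ofPowEqOne]
  rw [← Fintype.card_subtype, ← Nat.card_eq_fintype_card,
    Nat.card_congr ((Equiv.subtypeEquivRight hfiber).trans (χ.fiberEquivKer i₀))]
  simpa using χ.ker.card_addSubgroup_dvd_card

theorem sum_fin_pow_of_pow_eq_one {K : Type*} [Field K] {d : ℕ} {ζ : K} (hζ : ζ ^ d = 1) :
    ∑ i : Fin d, ζ ^ (i : ℕ) = if ζ = 1 then (d : K) else 0 := by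
  split_ifs with h1
  · simp [h1]
  · rw [Fin.sum_univ_eq_sum_range (ζ ^ ·), geom_sum_eq h1, hζ, sub_self, zero_div]

section DFT

variable {d : ℕ}

theorem isPrimitiveRoot_dftOmega (d : ℕ) [NeZero d] : IsPrimitiveRoot (dftOmega d) d :=
  Complex.isPrimitiveRoot_exp d (NeZero.ne d)

theorem dftOmega_ne_zero (d : ℕ) [NeZero d] : dftOmega d ≠ 0 :=
  (isPrimitiveRoot_dftOmega d).ne_zero (NeZero.ne d)

theorem conj_dftOmega [NeZero d] : conj (dftOmega d) = (dftOmega d)⁻¹ :=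
  (Complex.inv_eq_conj <| Complex.norm_eq_one_of_pow_eq_one
    (isPrimitiveRoot_dftOmega d).pow_eq_one (NeZero.ne d)).symm

theorem dftOmega_pow_div_pow_pow_self [NeZero d] (j k : ℕ) :
    (dftOmega d ^ j / dftOmega d ^ k) ^ d = 1 := by
  rw [div_pow, ← pow_mul, ← pow_mul, mul_comm j, mul_comm k, pow_mul, pow_mul,
    (isPrimitiveRoot_dftOmega d).pow_eq_one, one_pow, one_pow, div_one]

theorem ofReal_sqrt_natCast_ne_zero (d : ℕ) [NeZero d] : ((Real.sqrt d : ℝ) : ℂ) ≠ 0 := by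
  rw [Complex.ofReal_ne_zero, Real.sqrt_ne_zero']
  exact Nat.cast_pos.mpr (Nat.pos_of_neZero d)

theorem fourierVec_comm (j i : Fin d) : fourierVec d j i = fourierVec d i j := by
  rw [fourierVec, fourierVec, mul_comm]

theorem dftCoeff_sub (φ χ : Fin d → ℂ) (j : Fin d) :
    dftCoeff d (φ - χ) j = dftCoeff d φ j - dftCoeff d χ j := by
  simp only [dftCoeff, Pi.sub_apply, mul_sub, sum_sub_distrib]

theorem dftCoeff_fourierVec [NeZero d] (j k : Fin d) :
    dftCoeff d (fourierVec d k) j = if j = k then 1 else 0 := by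
  have hω := isPrimitiveRoot_dftOmega d
  set ζ := dftOmega d ^ (k : ℕ) / dftOmega d ^ (j : ℕ)
  have hζ1 : ζ = 1 ↔ j = k := by
    rw [div_eq_one_iff_eq (pow_ne_zero _ (dftOmega_ne_zero d)), eq_comm]
    exact ⟨fun h => Fin.ext (hω.pow_inj j.isLt k.isLt h), fun h => h ▸ rfl⟩
  have hsqrt : ((Real.sqrt d : ℝ) : ℂ) * (Real.sqrt d : ℝ) = d := by
    rw [← Complex.ofReal_mul, Real.mul_self_sqrt (Nat.cast_nonneg d), Complex.ofReal_natCast]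
  have hterm (i : Fin d) :
      conj (fourierVec d j i) * fourierVec d k i = ζ ^ (i : ℕ) / d := by
    rw [fourierVec, fourierVec, map_div₀, map_pow, conj_dftOmega, Complex.conj_ofReal,
      ← hsqrt, div_pow, ← pow_mul, ← pow_mul, inv_pow, mul_comm (k : ℕ), mul_comm (j : ℕ)]
    ring
  have hζ : ζ ^ d = 1 := dftOmega_pow_div_pow_pow_self _ _
  simp only [dftCoeff, hterm, ← sum_div, sum_fin_pow_of_pow_eq_one hζ, hζ1]
  split_ifs
  · exact div_self (Nat.cast_ne_zero.mpr (NeZero.ne d))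
  · exact zero_div _

theorem sum_dftCoeff_mul_fourierVec [NeZero d] (ψ : Fin d → ℂ) (i : Fin d) :
    ∑ j, dftCoeff d ψ j * fourierVec d j i = ψ i := by
  have hk (k : Fin d) : ∑ j, conj (fourierVec d j k) * ψ k * fourierVec d j i =
      ψ k * dftCoeff d (fourierVec d i) k := by
    simp only [dftCoeff, mul_sum, fourierVec_comm _ k, fourierVec_comm _ i]
    exact sum_congr rfl fun j _ => by ring
  simp only [dftCoeff, sum_mul]
  rw [sum_comm]
  simp [hk, dftCoeff_fourierVec]

theorem card_filter_eq_zero_add_nA (ψ : Fin d → ℂ) : #{i | ψ i = 0} + nA d ψ = d := by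
  rw [nA, card_filter_add_card_filter_not, card_univ, Fintype.card_fin]

theorem exists_eq_smul_add_smul_of_nB_eq_two [NeZero d] {ψ : Fin d → ℂ}
    (h : nB d ψ = 2) :
    ∃ (j k : Fin d) (a b : ℂ),
      a ≠ 0 ∧ ψ = a • fourierVec d j + b • fourierVec d k := by
  obtain ⟨j, k, hjk, hsupp⟩ := card_eq_two.mp h
  refine ⟨j, k, dftCoeff d ψ j, dftCoeff d ψ k, ?_, funext fun i => ?_⟩
  · have hj : j ∈ ({j, k} : Finset (Fin d)) := mem_insert_self j {k}
    rw [← hsupp] at hj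
    exact (mem_filter.mp hj).2
  · rw [← sum_dftCoeff_mul_fourierVec ψ i,
      ← sum_filter_of_ne fun j _ h => left_ne_zero_of_mul h, hsupp, sum_pair hjk]
    rfl

theorem smul_fourierVec_add_smul_fourierVec_eq_zero_iff [NeZero d] {a : ℂ} (b : ℂ)
    (ha : a ≠ 0) (j k i : Fin d) :
    (a • fourierVec d j + b • fourierVec d k) i = 0 ↔
      (dftOmega d ^ (j : ℕ) / dftOmega d ^ (k : ℕ)) ^ (i : ℕ) = -b / a := by
  rw [div_pow, ← pow_mul, ← pow_mul, mul_comm (j : ℕ), mul_comm (k : ℕ),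
    div_eq_div_iff (pow_ne_zero _ (dftOmega_ne_zero d)) ha]
  simp only [Pi.add_apply, Pi.smul_apply, smul_eq_mul, fourierVec, mul_div_assoc', ← add_div,
    div_eq_zero_iff, ofReal_sqrt_natCast_ne_zero d, or_false]
  constructor <;> intro h <;> linear_combination h

theorem card_filter_eq_zero_dvd_of_nB_eq_two [NeZero d] {ψ : Fin d → ℂ} (h : nB d ψ = 2)
    {i₀ : Fin d} (hi₀ : ψ i₀ = 0) : #{i | ψ i = 0} ∣ d := by
  obtain ⟨j, k, a, b, ha, rfl⟩ := exists_eq_smul_add_smul_of_nB_eq_two h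
  simp only [smul_fourierVec_add_smul_fourierVec_eq_zero_iff b ha] at hi₀ ⊢
  rw [← hi₀]
  exact card_filter_pow_eq_pow_dvd (dftOmega_pow_div_pow_pow_self _ _) i₀

theorem nB_fourierVec_sub_fourierVec [NeZero d] {j k : Fin d} (hjk : j ≠ k) :
    nB d (fourierVec d j - fourierVec d k) = 2 := by
  rw [nB, card_eq_two]
  refine ⟨j, k, hjk, ?_⟩
  ext l
  simp only [mem_filter, mem_univ, true_and, mem_insert, mem_singleton, dftCoeff_sub,
    dftCoeff_fourierVec]
  by_cases hlj : l = j <;> by_cases hlk : l = k <;> simp_all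

theorem fourierVec_zero_sub_fourierVec_eq_zero_iff [NeZero d] (N i : Fin d) :
    (fourierVec d 0 - fourierVec d N) i = 0 ↔ d ∣ i * N := by
  rw [Pi.sub_apply, sub_eq_zero, fourierVec, fourierVec,
    div_left_inj' (ofReal_sqrt_natCast_ne_zero d), Fin.val_zero, mul_zero, pow_zero, eq_comm,
    (isPrimitiveRoot_dftOmega d).pow_eq_one_iff_dvd]

theorem card_filter_fourierVec_zero_sub_fourierVec_eq_zero [NeZero d] (N : Fin d)
    (hN : (N : ℕ) ∣ d) : #{i | (fourierVec d 0 - fourierVec d N) i = 0} = N := by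
  obtain ⟨e, he⟩ := hN
  have hN0 : 0 < (N : ℕ) := Nat.pos_of_ne_zero fun h => NeZero.ne d (by simp [he, h])
  have he0 : 0 < e := Nat.pos_of_ne_zero fun h => NeZero.ne d (by simp [he, h])
  have hzero (i : Fin d) : (fourierVec d 0 - fourierVec d N) i = 0 ↔ e ∣ i := by
    rw [fourierVec_zero_sub_fourierVec_eq_zero_iff, mul_comm (i : ℕ)]
    nth_rw 1 [he]
    exact Nat.mul_dvd_mul_iff_left hN0
  simp only [hzero]
  rw [card_filter, Fin.sum_univ_eq_sum_range (fun i => if e ∣ i then 1 else 0), ← card_filter]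
  have hcount := card_filter_dvd_range_mul N he0
  rwa [← he] at hcount

end DFT

theorem hole_characterization_nB_two_general (d n : ℕ)
    (hn : 1 ≤ n) (hnd : 2 * n ≤ d) :
    (∃ ψ : Fin d → ℂ, ψ ≠ 0 ∧ nA d ψ = d - n ∧ nB d ψ = 2) ↔ n ∣ d := by
  have : NeZero d := ⟨by omega⟩
  constructor
  · rintro ⟨ψ, -, hA, hB⟩
    have hzeros : #{i | ψ i = 0} = n := by
      have := card_filter_eq_zero_add_nA ψ
      omega
    obtain ⟨i₀, hi₀⟩ := card_pos.mp (hzeros ▸ hn)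
    exact hzeros ▸ card_filter_eq_zero_dvd_of_nB_eq_two hB (mem_filter.mp hi₀).2
  · intro hdvd
    let N : Fin d := ⟨n, by omega⟩
    have hB : nB d (fourierVec d 0 - fourierVec d N) = 2 :=
      nB_fourierVec_sub_fourierVec (Fin.ne_of_val_ne (by simp [N]; omega))
    have hzeros : #{i | (fourierVec d 0 - fourierVec d N) i = 0} = n :=
      card_filter_fourierVec_zero_sub_fourierVec_eq_zero N hdvd
    refine ⟨fourierVec d 0 - fourierVec d N, fun h => ?_, ?_, hB⟩
    · rw [h, nB] at hB
      simp [dftCoeff] at hB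
    · have := card_filter_eq_zero_add_nA (fourierVec d 0 - fourierVec d N)
      omega

/-- Theorem 2: for `1 ≤ n ≤ d/2`, the point `(d−n, 2)` belongs to the uncertainty
diagram of the DFT if and only if `n ∣ d`. -/
theorem hole_characterization_nB_two (d n : ℕ) (hd : 2 ≤ d)
    (hn : 1 ≤ n) (hnd : 2 * n ≤ d) :
    (∃ ψ : Fin d → ℂ, ψ ≠ 0 ∧ nA d ψ = d - n ∧ nB d ψ = 2) ↔ n ∣ d :=
  hole_characterization_nB_two_general d n hn hnd
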